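/- arXiv:1901.07477 — 2 statements merged into one kernel-verified Lean document; each statement's English description precedes it below -/
import Mathlib

section
/- Let B be a C*-algebra, μ a state on B, and a₁, a₂ ∈ B contractions (‖aᵢ‖ ≤ 1). Set cᵢ := 1 − Re μ(aᵢ) for i = 1, 2. Then 1 − Re μ(a₁a₂) ≤ c₁ + c₂ + 2√(c₁c₂). -/
/-!
For a self-adjoint contraction `e`, expanding `(e - a₁)(e - a₂) = e² - e a₂ - a₁ e + a₁ a₂` and
applying Cauchy–Schwarz to the form `(x, y) ↦ μ(x⋆y)` bounds `1 - Re μ(a₁a₂)` by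
`c₁' + c₂' + 2√(c₁'c₂')`, where `c₁' = 1 - Re μ(a₁e)` and `c₂' = 1 - Re μ(ea₂)`: indeed
`Re μ((e - aᵢ)⋆(e - aᵢ)) ≤ 2cᵢ'` because `e`, `aᵢ` are contractions and `‖μ‖ ≤ 1`.
Letting `e` run through an increasing approximate unit, `cᵢ' → cᵢ`.
-/

open scoped ComplexOrder

namespace PositiveLinearMap

variable {A : Type*} [NonUnitalCStarAlgebra A] [PartialOrder A] [StarOrderedRing A]
  (f : A →ₚ[ℂ] ℂ)

theorem norm_apply_star_mul_le (x y : A) :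
    ‖f (star x * y)‖ ≤ √(f (star x * x)).re * √(f (star y * y)).re :=
  norm_inner_le_norm (𝕜 := ℂ) (f.toPreGNS x) (f.toPreGNS y)

theorem re_apply_star (x : A) : (f (star x)).re = (f x).re := by
  rw [map_star, Complex.star_def, Complex.conj_re]

theorem continuous_one_sub_re_apply : Continuous fun x ↦ 1 - (f x).re :=
  continuous_const.sub (Complex.continuous_re.comp (map_continuous f))

variable {f} (hf : ∀ x, ‖f x‖ ≤ ‖x‖)
include hf

omit [StarOrderedRing A] in
theorem re_apply_le_one {x : A} (hx : ‖x‖ ≤ 1) : (f x).re ≤ 1 :=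
  (Complex.re_le_norm _).trans ((hf x).trans hx)

omit [StarOrderedRing A] in
theorem re_apply_mul_le_one {x y : A} (hx : ‖x‖ ≤ 1) (hy : ‖y‖ ≤ 1) : (f (x * y)).re ≤ 1 :=
  re_apply_le_one hf <| (norm_mul_le x y).trans <| mul_le_one₀ hx (norm_nonneg y) hy

theorem re_apply_star_sub_mul_sub_le {e x : A} (he : IsSelfAdjoint e) (he₁ : ‖e‖ ≤ 1)
    (hx : ‖x‖ ≤ 1) : (f (star (e - x) * (e - x))).re ≤ 2 * (1 - (f (e * x)).re) := by
  have hexp : star (e - x) * (e - x) = e * e - e * x - star x * e + star x * x := by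
    rw [star_sub, he.star_eq]; noncomm_ring
  have hsymm : (f (star x * e)).re = (f (e * x)).re := by
    rw [← he.star_eq, ← star_mul, re_apply_star, he.star_eq]
  have hee := re_apply_mul_le_one hf he₁ he₁
  have hxx := re_apply_mul_le_one hf (x := star x) (by rwa [norm_star]) hx
  simp only [hexp, map_add, map_sub, Complex.add_re, Complex.sub_re, hsymm]
  linarith

theorem one_sub_re_apply_mul_le_of_isSelfAdjoint {e a₁ a₂ : A} (he : IsSelfAdjoint e)
    (he₁ : ‖e‖ ≤ 1) (ha₁ : ‖a₁‖ ≤ 1) (ha₂ : ‖a₂‖ ≤ 1) :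
    1 - (f (a₁ * a₂)).re ≤ (1 - (f (a₁ * e)).re) + (1 - (f (e * a₂)).re) +
      2 * √((1 - (f (a₁ * e)).re) * (1 - (f (e * a₂)).re)) := by
  set c₁ := 1 - (f (a₁ * e)).re
  set c₂ := 1 - (f (e * a₂)).re
  have hP₁ : (f (star (e - star a₁) * (e - star a₁))).re ≤ 2 * c₁ := by
    have h := re_apply_star_sub_mul_sub_le hf he he₁ (x := star a₁) (by rwa [norm_star])
    rwa [← he.star_eq, ← star_mul, re_apply_star, he.star_eq] at h
  have hP₂ : (f (star (e - a₂) * (e - a₂))).re ≤ 2 * c₂ :=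
    re_apply_star_sub_mul_sub_le hf he he₁ ha₂
  have hT : ‖f ((e - a₁) * (e - a₂))‖ ≤ 2 * √(c₁ * c₂) := by
    have hstar : star (e - star a₁) = e - a₁ := by rw [star_sub, he.star_eq, star_star]
    calc ‖f ((e - a₁) * (e - a₂))‖
        ≤ √(f (star (e - star a₁) * (e - star a₁))).re * √(f (star (e - a₂) * (e - a₂))).re := by
          simpa only [hstar] using norm_apply_star_mul_le f (e - star a₁) (e - a₂)
      _ ≤ √(2 * c₁) * √(2 * c₂) := by gcongr
      _ = 2 * √(c₁ * c₂) := by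
          have hc₁ : 0 ≤ 2 * c₁ := by linarith [re_apply_mul_le_one hf ha₁ he₁]
          rw [← Real.sqrt_mul hc₁, mul_mul_mul_comm, ← sq, Real.sqrt_mul (sq_nonneg 2),
            Real.sqrt_sq zero_le_two]
  have hTre : (f ((e - a₁) * (e - a₂))).re =
      (f (e * e)).re - (f (e * a₂)).re - (f (a₁ * e)).re + (f (a₁ * a₂)).re := by
    rw [show (e - a₁) * (e - a₂) = e * e - e * a₂ - a₁ * e + a₁ * a₂ by noncomm_ring]
    simp only [map_add, map_sub, Complex.add_re, Complex.sub_re]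
  have hee := re_apply_mul_le_one hf he₁ he₁
  have hre := (neg_le_abs _).trans (Complex.abs_re_le_norm (f ((e - a₁) * (e - a₂))))
  linarith

open Filter Topology in
theorem one_sub_re_apply_mul_le {a₁ a₂ : A} (ha₁ : ‖a₁‖ ≤ 1) (ha₂ : ‖a₂‖ ≤ 1) :
    1 - (f (a₁ * a₂)).re ≤ (1 - (f a₁).re) + (1 - (f a₂).re) +
      2 * √((1 - (f a₁).re) * (1 - (f a₂).re)) := by
  have hl := CStarAlgebra.increasingApproximateUnit A
  have hc₁ : Tendsto (fun e ↦ 1 - (f (a₁ * e)).re) (CStarAlgebra.approximateUnit A)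
      (𝓝 (1 - (f a₁).re)) :=
    ((continuous_one_sub_re_apply f).tendsto a₁).comp (hl.tendsto_mul_left a₁)
  have hc₂ : Tendsto (fun e ↦ 1 - (f (e * a₂)).re) (CStarAlgebra.approximateUnit A)
      (𝓝 (1 - (f a₂).re)) :=
    ((continuous_one_sub_re_apply f).tendsto a₂).comp (hl.tendsto_mul_right a₂)
  refine ge_of_tendsto ((hc₁.add hc₂).add ((hc₁.mul hc₂).sqrt.const_mul 2)) ?_
  filter_upwards [hl.eventually_isSelfAdjoint, hl.eventually_norm] with e he he₁
  exact one_sub_re_apply_mul_le_of_isSelfAdjoint hf he he₁ ha₁ ha₂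

end PositiveLinearMap

/-- For a state `μ` on a C*-algebra `B` and contractions `a₁ a₂`, with
`cᵢ = 1 - Re μ(aᵢ)`, one has `1 - Re μ(a₁a₂) ≤ c₁ + c₂ + 2√(c₁c₂)`. -/
theorem stmt0 {B : Type*} [NonUnitalNormedRing B] [StarRing B] [CStarRing B]
    [NormedSpace ℂ B] [IsScalarTower ℂ B B] [SMulCommClass ℂ B B] [StarModule ℂ B]
    [CompleteSpace B]
    (μ : B →L[ℂ] ℂ) (hμ_pos : ∀ a : B, 0 ≤ μ (star a * a)) (hμ_norm : ‖μ‖ = 1)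
    (a₁ a₂ : B) (ha₁ : ‖a₁‖ ≤ 1) (ha₂ : ‖a₂‖ ≤ 1) :
    1 - (μ (a₁ * a₂)).re ≤
      (1 - (μ a₁).re) + (1 - (μ a₂).re) +
        2 * Real.sqrt ((1 - (μ a₁).re) * (1 - (μ a₂).re)) := by
  let _ : NonUnitalCStarAlgebra B := {}
  let _ := CStarAlgebra.spectralOrder B
  have _ := CStarAlgebra.spectralOrderedRing B
  let f : B →ₚ[ℂ] ℂ := .mk₀ μ.toLinearMap fun x hx ↦ by
    obtain ⟨b, rfl⟩ := CStarAlgebra.nonneg_iff_eq_star_mul_self.mp hx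
    exact hμ_pos b
  have hf (x : B) : ‖f x‖ ≤ ‖x‖ := (μ.le_of_opNorm_le hμ_norm.le x).trans_eq (one_mul _)
  exact f.one_sub_re_apply_mul_le hf ha₁ ha₂
end

section
/- Every f ∈ C_c⁴(ℝ) (four times continuously differentiable, compactly supported) is a finite linear combination of functions that are both in C₀²(ℝ) and continuous positive-definite on ℝ. -/
open MeasureTheory Filter Real
open scoped ComplexOrder FourierTransform RealInnerProductSpace Topology

/-!
Write `f = 𝓕 G` with `G = 𝓕⁻ f`. Four integrations by parts give `(1 + w⁴) |G w| ≤ M`, so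
`(1 + w²) G` is integrable. Splitting `G` into the positive and negative parts of its real and
imaginary parts writes it as `G = ∑ uᵢ Qᵢ` with `uᵢ ∈ {1, -1, i, -i}` and `0 ≤ Qᵢ ≤ |G|`.
Each `𝓕 Qᵢ` is `C²` with derivatives vanishing at infinity (moments of order `≤ 2` and
Riemann–Lebesgue), and is positive definite because
`∑ⱼₗ aⱼ āₗ 𝓕 Qᵢ (ξⱼ - ξₗ) = ∫ |∑ⱼ aⱼ e^{-2πi t ξⱼ}|² Qᵢ t dt`.
-/

def IsPositiveDefinite {G : Type*} [AddGroup G] (g : G → ℂ) : Prop :=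
  ∀ (m : ℕ) (a : Fin m → ℂ) (ξ : Fin m → G),
    0 ≤ ∑ j : Fin m, ∑ l : Fin m, a j * starRingEnd ℂ (a l) * g (ξ j - ξ l)

def C0 (E : Type*) [NormedAddCommGroup E] [NormedSpace ℝ E] (n : ℕ) : Set (ℝ → E) :=
  {g | ContDiff ℝ n g ∧ ∀ k ≤ n, Tendsto (iteratedDeriv k g) (cocompact ℝ) (𝓝 0)}

section Fourier

variable {V : Type*} [NormedAddCommGroup V] [InnerProductSpace ℝ V]

lemma sum_sum_mul_conj_mul_fourierChar {m : ℕ} (a : Fin m → ℂ) (ξ : Fin m → V) (v : V) :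
    ∑ j : Fin m, ∑ l : Fin m, a j * starRingEnd ℂ (a l) * (𝐞 (-⟪v, ξ j - ξ l⟫) : ℂ) =
      Complex.normSq (∑ j : Fin m, a j * 𝐞 (-⟪v, ξ j⟫)) := by
  have hchar (j l : Fin m) :
      (𝐞 (-⟪v, ξ j - ξ l⟫) : ℂ) = 𝐞 (-⟪v, ξ j⟫) * starRingEnd ℂ (𝐞 (-⟪v, ξ l⟫)) := by
    rw [← Circle.coe_inv_eq_conj, ← AddChar.map_neg_eq_inv, ← Circle.coe_mul,
      ← AddChar.map_add_eq_mul, inner_sub_right]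
    ring_nf
  rw [← Complex.mul_conj, map_sum, Finset.sum_mul_sum]
  refine Finset.sum_congr rfl fun j _ ↦ Finset.sum_congr rfl fun l _ ↦ ?_
  rw [hchar, map_mul]
  ring

variable [MeasurableSpace V] [BorelSpace V] [FiniteDimensional ℝ V]
  {E : Type*} [NormedAddCommGroup E] [NormedSpace ℂ E]

theorem MeasureTheory.Integrable.continuous_fourier {f : V → E} (hf : Integrable f) :
    Continuous (𝓕 f) :=
  VectorFourier.fourierIntegral_continuous continuous_fourierChar continuous_inner hf

theorem Real.fourier_sum_smul {ι : Type*} [Fintype ι] (c : ι → ℂ) {F : ι → V → E}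
    (hF : ∀ i, Integrable (F i)) (w : V) :
    𝓕 (fun v ↦ ∑ i, c i • F i v) w = ∑ i, c i • 𝓕 (F i) w := by
  simp only [Real.fourier_eq, Finset.smul_sum, smul_comm (𝐞 _) (c _)]
  rw [integral_finsetSum (f := fun i v ↦ c i • 𝐞 (-⟪v, w⟫) • F i v) _
    fun i _ ↦ ((Real.fourierIntegral_convergent_iff w).2 (hF i)).smul _]
  simp_rw [integral_smul]

theorem isPositiveDefinite_fourier_ofReal {Q : V → ℝ} (hQ : Integrable Q) (hQ0 : 0 ≤ Q) :
    IsPositiveDefinite (𝓕 fun v ↦ (Q v : ℂ)) := by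
  intro m a ξ
  have hint (j l : Fin m) : Integrable fun v ↦
      a j * starRingEnd ℂ (a l) * (𝐞 (-⟪v, ξ j - ξ l⟫) • (Q v : ℂ)) :=
    ((Real.fourierIntegral_convergent_iff _).2 hQ.ofReal).const_mul _
  calc (0 : ℂ) ≤ ((∫ v, Complex.normSq (∑ j : Fin m, a j * 𝐞 (-⟪v, ξ j⟫)) * Q v : ℝ) : ℂ) := by
        exact_mod_cast integral_nonneg fun v ↦ mul_nonneg (Complex.normSq_nonneg _) (hQ0 v)
    _ = ∫ v, ((Complex.normSq (∑ j : Fin m, a j * 𝐞 (-⟪v, ξ j⟫)) * Q v : ℝ) : ℂ) :=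
        integral_ofReal.symm
    _ = ∫ v, ∑ j : Fin m, ∑ l : Fin m,
          a j * starRingEnd ℂ (a l) * (𝐞 (-⟪v, ξ j - ξ l⟫) • (Q v : ℂ)) := by
        congr 1 with v
        simp only [Circle.smul_def, smul_eq_mul, ← mul_assoc, ← Finset.sum_mul,
          sum_sum_mul_conj_mul_fourierChar]
        push_cast
        rfl
    _ = _ := by
        rw [integral_finsetSum _ fun j _ ↦ integrable_finsetSum _ fun l _ ↦ hint j l]
        simp_rw [integral_finsetSum _ fun l _ ↦ hint _ l, integral_const_mul, Real.fourier_eq]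

end Fourier

def reImUnit : Fin 4 → ℂ := ![1, -1, Complex.I, -Complex.I]

/-- The four parts `(re z)⁺, (re z)⁻, (im z)⁺, (im z)⁻`. -/
def reImPart (i : Fin 4) (z : ℂ) : ℝ := max (z * starRingEnd ℂ (reImUnit i)).re 0

lemma reImPart_nonneg (i : Fin 4) (z : ℂ) : 0 ≤ reImPart i z := le_max_right _ _

lemma norm_reImUnit (i : Fin 4) : ‖reImUnit i‖ = 1 := by
  fin_cases i <;> simp [reImUnit]

lemma norm_ofReal_reImPart_le (i : Fin 4) (z : ℂ) : ‖(reImPart i z : ℂ)‖ ≤ ‖z‖ := by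
  rw [Complex.norm_real, Real.norm_of_nonneg (reImPart_nonneg i z)]
  refine max_le ((Complex.re_le_norm _).trans_eq ?_) (norm_nonneg z)
  rw [norm_mul, RCLike.norm_conj, norm_reImUnit, mul_one]

lemma continuous_reImPart (i : Fin 4) : Continuous (reImPart i) := by
  unfold reImPart
  fun_prop

lemma sum_reImUnit_mul_reImPart (z : ℂ) : ∑ i, reImUnit i * reImPart i z = z := by
  apply Complex.ext <;>
    simp [Fin.sum_univ_four, reImUnit, reImPart, ← sub_eq_add_neg,
      max_zero_sub_max_neg_zero_eq_self]

section Decay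

variable {E : Type*} [NormedAddCommGroup E]

theorem HasCompactSupport.iteratedDeriv {𝕜 F : Type*} [NontriviallyNormedField 𝕜]
    [NormedAddCommGroup F] [NormedSpace 𝕜 F] {f : 𝕜 → F} (hf : HasCompactSupport f) (n : ℕ) :
    HasCompactSupport (_root_.iteratedDeriv n f) := by
  induction n with
  | zero => simpa using hf
  | succ n ih => rw [iteratedDeriv_succ]; exact ih.deriv

lemma abs_pow_le_one_add_sq {n : ℕ} (hn : n ≤ 2) (x : ℝ) : |x| ^ n ≤ 1 + x ^ 2 := by
  interval_cases n
  · simp [sq_nonneg]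
  · nlinarith [sq_nonneg (|x| - 1), sq_abs x]
  · simp [sq_abs]

lemma integrable_pow_smul_of_integrable_one_add_sq_mul [NormedSpace ℝ E] {h : ℝ → E}
    (hm : AEStronglyMeasurable h) (hh : Integrable fun x ↦ (1 + x ^ 2) * ‖h x‖)
    {n : ℕ} (hn : n ≤ 2) : Integrable fun x ↦ x ^ n • h x := by
  refine hh.mono' ((continuous_pow n).aestronglyMeasurable.smul hm) (ae_of_all _ fun x ↦ ?_)
  rw [norm_smul, norm_pow, Real.norm_eq_abs]
  exact mul_le_mul_of_nonneg_right (abs_pow_le_one_add_sq hn x) (norm_nonneg _)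

lemma integrable_of_integrable_one_add_sq_mul [NormedSpace ℝ E] {h : ℝ → E}
    (hm : AEStronglyMeasurable h) (hh : Integrable fun x ↦ (1 + x ^ 2) * ‖h x‖) :
    Integrable h := by
  simpa using integrable_pow_smul_of_integrable_one_add_sq_mul hm hh zero_le_two

lemma integrable_one_add_sq_mul_of_bound {h : ℝ → E} (hm : AEStronglyMeasurable h) {M : ℝ}
    (hM : ∀ x, (1 + x ^ 4) * ‖h x‖ ≤ M) : Integrable fun x ↦ (1 + x ^ 2) * ‖h x‖ := by
  refine (integrable_inv_one_add_sq.const_mul (2 * M)).mono'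
    ((continuous_const.add (continuous_pow 2)).aestronglyMeasurable.mul hm.norm)
    (ae_of_all _ fun x ↦ ?_)
  have hpos : 0 < 1 + x ^ 2 := by positivity
  have hsq : (1 + x ^ 2) * (1 + x ^ 2) ≤ 2 * (1 + x ^ 4) := by nlinarith [sq_nonneg (x ^ 2 - 1)]
  rw [Real.norm_of_nonneg (by positivity), ← div_eq_mul_inv, le_div_iff₀ hpos]
  nlinarith [mul_le_mul_of_nonneg_right hsq (norm_nonneg (h x)), hM x]

variable [NormedSpace ℂ E]

theorem fourier_mem_C0 {h : ℝ → E} {N : ℕ}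
    (hh : ∀ n ≤ N, Integrable fun x ↦ x ^ n • h x) : 𝓕 h ∈ C0 E N := by
  refine ⟨Real.contDiff_fourier fun n hn ↦ ?_, fun k hk ↦ ?_⟩
  · simpa [norm_smul] using (hh n (by exact_mod_cast hn)).norm
  · rw [Real.iteratedDeriv_fourier (N := N) (fun n hn ↦ hh n (by exact_mod_cast hn))
      (by exact_mod_cast hk)]
    exact Real.zero_at_infty_fourier _

lemma pow_mul_norm_fourier_le_integral_norm_iteratedDeriv {f : ℝ → E} {n : ℕ}
    (hf : ContDiff ℝ n f) (hint : ∀ k ≤ n, Integrable (iteratedDeriv k f)) (w : ℝ) :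
    (2 * π * |w|) ^ n * ‖𝓕 f w‖ ≤ ∫ v, ‖iteratedDeriv n f v‖ := by
  have hderiv :=
    congrFun (Real.fourier_iteratedDeriv (N := n) hf (by exact_mod_cast hint) le_rfl) w
  calc (2 * π * |w|) ^ n * ‖𝓕 f w‖ = ‖𝓕 (iteratedDeriv n f) w‖ := by
        rw [hderiv, norm_smul, norm_pow]
        simp [abs_of_pos pi_pos]
    _ ≤ _ := VectorFourier.norm_fourierIntegral_le_integral_norm _ _ _ _ _

lemma integrable_one_add_sq_mul_norm_fourier {f : ℝ → E} (hf : ContDiff ℝ 4 f)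
    (hsupp : HasCompactSupport f) : Integrable fun w ↦ (1 + w ^ 2) * ‖𝓕 f w‖ := by
  have hint (k : ℕ) (hk : k ≤ 4) : Integrable (iteratedDeriv k f) :=
    (hf.continuous_iteratedDeriv k (by exact_mod_cast hk)).integrable_of_hasCompactSupport
      (hsupp.iteratedDeriv k)
  have hfi : Integrable f := hf.continuous.integrable_of_hasCompactSupport hsupp
  refine integrable_one_add_sq_mul_of_bound hfi.continuous_fourier.aestronglyMeasurable
    (M := (∫ v, ‖f v‖) + (∫ v, ‖iteratedDeriv 4 f v‖) / (2 * π) ^ 4) fun w ↦ ?_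
  have h0 : ‖𝓕 f w‖ ≤ ∫ v, ‖f v‖ := VectorFourier.norm_fourierIntegral_le_integral_norm _ _ _ _ _
  have h4 : w ^ 4 * ‖𝓕 f w‖ ≤ (∫ v, ‖iteratedDeriv 4 f v‖) / (2 * π) ^ 4 := by
    rw [le_div_iff₀ (by positivity), ← Even.pow_abs (by decide), mul_right_comm, ← mul_pow,
      mul_comm |w|]
    exact pow_mul_norm_fourier_le_integral_norm_iteratedDeriv hf hint w
  linarith [add_mul 1 (w ^ 4) ‖𝓕 f w‖]

end Decay

/-- Every compactly supported `C⁴` function on `ℝ` is a finite linear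
combination of functions lying in `C₀²(ℝ)` (twice continuously differentiable,
vanishing at infinity together with the first two derivatives) that are
continuous positive-definite functions on `ℝ`. -/
theorem stmt14 (f : ℝ → ℂ) (hf : ContDiff ℝ 4 f) (hsupp : HasCompactSupport f) :
    ∃ (n : ℕ) (c : Fin n → ℂ) (g : Fin n → ℝ → ℂ),
      (∀ i : Fin n,
        ContDiff ℝ 2 (g i) ∧
        (∀ k : ℕ, k ≤ 2 → Tendsto (iteratedDeriv k (g i)) (cocompact ℝ) (nhds 0)) ∧
        Continuous (g i) ∧
        (∀ (m : ℕ) (a : Fin m → ℂ) (ξ : Fin m → ℝ),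
          0 ≤ ∑ j : Fin m, ∑ l : Fin m,
            a j * starRingEnd ℂ (a l) * g i (ξ j - ξ l))) ∧
      f = fun x : ℝ => ∑ i : Fin n, c i * g i x := by
  have hfi : Integrable f := hf.continuous.integrable_of_hasCompactSupport hsupp
  have h𝓕f : Integrable (𝓕 f) := integrable_of_integrable_one_add_sq_mul
    hfi.continuous_fourier.aestronglyMeasurable (integrable_one_add_sq_mul_norm_fourier hf hsupp)
  set G : ℝ → ℂ := 𝓕 fun x ↦ f (-x)
  have hG : Integrable fun t ↦ (1 + t ^ 2) * ‖G t‖ := integrable_one_add_sq_mul_norm_fourier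
    (hf.comp contDiff_neg) (hsupp.comp_homeomorph (Homeomorph.neg ℝ))
  set Q : Fin 4 → ℝ → ℝ := fun i t ↦ reImPart i (G t)
  have hQm (i : Fin 4) : AEStronglyMeasurable fun t ↦ (Q i t : ℂ) :=
    (Complex.continuous_ofReal.comp <|
      (continuous_reImPart i).comp hfi.comp_neg.continuous_fourier).aestronglyMeasurable
  have hQ (i : Fin 4) : Integrable fun t ↦ (1 + t ^ 2) * ‖(Q i t : ℂ)‖ :=
    hG.mono' (by fun_prop) (ae_of_all _ fun t ↦ by
      rw [norm_mul, norm_norm, Real.norm_of_nonneg (by positivity)]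
      exact mul_le_mul_of_nonneg_left (norm_ofReal_reImPart_le i (G t)) (by positivity))
  refine ⟨4, reImUnit, fun i ↦ 𝓕 fun t ↦ (Q i t : ℂ), fun i ↦ ?_, ?_⟩
  · obtain ⟨hC2, hvanish⟩ := fourier_mem_C0 fun n hn ↦
      integrable_pow_smul_of_integrable_one_add_sq_mul (hQm i) (hQ i) hn
    exact ⟨hC2, hvanish, hC2.continuous, isPositiveDefinite_fourier_ofReal
      (by simpa using (integrable_of_integrable_one_add_sq_mul (hQm i) (hQ i)).re)
      (fun t ↦ reImPart_nonneg i (G t))⟩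
  · calc f = 𝓕 (𝓕⁻ f) := (hf.continuous.fourier_fourierInv_eq hfi h𝓕f).symm
      _ = 𝓕 G := by rw [Real.fourierInv_eq_fourier_comp_neg]
      _ = 𝓕 fun t ↦ ∑ i, reImUnit i • (Q i t : ℂ) := by
          simp only [smul_eq_mul, Q, sum_reImUnit_mul_reImPart]
      _ = _ := funext <| Real.fourier_sum_smul reImUnit fun i ↦
          integrable_of_integrable_one_add_sq_mul (hQm i) (hQ i)
end
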